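/- Under the bijection (Ψ, Ω) between proper T-ideals of k⟨X⟩ and proper operadic ideals of As: if a T-ideal J is generated as a T-ideal by multilinear polynomials f₁,...,f_s, then the operadic ideal Ψ(J) is generated as an operadic ideal of As by the elements Φ⁻¹_{deg fᵢ}(fᵢ), i = 1,...,s. -/

import Mathlib

open scoped BigOperators

noncomputable section

namespace AsOperadPaper

/-- The free associative algebra `k⟨X⟩` on countably many indeterminates. -/
abbrev FX (k : Type) [Field k] := FreeAlgebra k ℕ

variable (k : Type) [Field k]

/-- The multilinear monomial `x_{σ⁻¹(1)} ⋯ x_{σ⁻¹(n)}` attached to a permutation `σ`. -/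
def permMono (n : ℕ) (σ : Equiv.Perm (Fin n)) : FreeAlgebra k (Fin n) :=
  (List.ofFn fun i => FreeAlgebra.ι k (σ⁻¹ i)).prod

/-- `Φₙ : k[Sₙ] → k⟨x₁,…,xₙ⟩`, `σ ↦ x_{σ⁻¹(1)} ⋯ x_{σ⁻¹(n)}`. -/
def Phi (n : ℕ) : MonoidAlgebra k (Equiv.Perm (Fin n)) →ₗ[k] FreeAlgebra k (Fin n) :=
  Finsupp.linearCombination k (permMono k n) ∘ₗ (MonoidAlgebra.coeffLinearEquiv k).toLinearMap

/-- `Vₙ`: the space of multilinear polynomials of degree `n`. -/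
def Vmulti (n : ℕ) : Submodule k (FreeAlgebra k (Fin n)) :=
  Submodule.span k (Set.range (permMono k n))

/-- The right `Sₙ`-action on polynomials: `x_{i₁}⋯x_{iₙ} * τ = x_{τ⁻¹(i₁)}⋯x_{τ⁻¹(iₙ)}`. -/
def permAction (n : ℕ) (τ : Equiv.Perm (Fin n)) : FreeAlgebra k (Fin n) →ₐ[k] FreeAlgebra k (Fin n) :=
  FreeAlgebra.lift k fun j => FreeAlgebra.ι k (τ⁻¹ j)

/-- `Vₙ(A)`: multilinear polynomials of degree `n` that are identities of `A`. -/
def VnA (A : Type) [Ring A] [Algebra k A] (n : ℕ) : Set (FreeAlgebra k (Fin n)) :=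
  { f | f ∈ Vmulti k n ∧ ∀ a : Fin n → A, FreeAlgebra.lift k a f = 0 }

/-- The kernel of `γₙ : As(n) → End_A(n)`, i.e. `Φₙ⁻¹(Vₙ(A))`. -/
def kerGamma (A : Type) [Ring A] [Algebra k A] (n : ℕ) :
    Set (MonoidAlgebra k (Equiv.Perm (Fin n))) :=
  { θ | ∀ a : Fin n → A, FreeAlgebra.lift k a (Phi k n θ) = 0 }

/-- Renaming `x₁,…,xₙ` into the first `n` variables of `k⟨X⟩`. -/
def toFX (n : ℕ) (f : FreeAlgebra k (Fin n)) : FX k :=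
  FreeAlgebra.lift k (fun i : Fin n => FreeAlgebra.ι k (i : ℕ)) f

/-- shift of variables used in partial composition -/
def shiftIn (m n : ℕ) (i : Fin m) : FreeAlgebra k (Fin n) →ₐ[k] FreeAlgebra k (Fin (m + n - 1)) :=
  FreeAlgebra.lift k fun t =>
    FreeAlgebra.ι k ⟨i.1 + t.1, by have h1 := i.isLt; have h2 := t.isLt; omega⟩

/-- substitution of `g` into the `i`-th variable (block substitution). -/
def insertAt (m n : ℕ) (i : Fin m) (g : FreeAlgebra k (Fin n)) :
    FreeAlgebra k (Fin m) →ₐ[k] FreeAlgebra k (Fin (m + n - 1)) :=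
  FreeAlgebra.lift k fun j =>
    if h1 : j.1 < i.1 then FreeAlgebra.ι k ⟨j.1, by have := i.isLt; omega⟩
    else if h2 : j.1 = i.1 then shiftIn k m n i g
    else FreeAlgebra.ι k ⟨j.1 + n - 1, by have := j.isLt; omega⟩

/-- The partial composition `μ ∘ᵢ ν`, expressed on the polynomial side:
`f(x₁,…,x_{i-1}, g(xᵢ,…,x_{i+n-1}), x_{i+n},…,x_{m+n-1})`. -/
def compAt (m n : ℕ) (i : Fin m) (f : FreeAlgebra k (Fin m)) (g : FreeAlgebra k (Fin n)) :
    FreeAlgebra k (Fin (m + n - 1)) :=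
  insertAt k m n i g f

/-- An operadic ideal of the associative operad `As` (with `As(n) = k[Sₙ]`):
a collection of `k`-subspaces invariant under the right `Sₙ`-action and closed
under partial composition (on either side) with arbitrary elements of `As`,
where partial composition is read through the identification `Φ`. -/
structure IsOperadicIdeal (I : ∀ n, Set (MonoidAlgebra k (Equiv.Perm (Fin n)))) : Prop where
  zero_mem : ∀ n, (0 : MonoidAlgebra k (Equiv.Perm (Fin n))) ∈ I n
  add_mem : ∀ n x y, x ∈ I n → y ∈ I n → x + y ∈ I n
  smul_mem : ∀ (n) (c : k) (x), x ∈ I n → c • x ∈ I n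
  perm_mem : ∀ (n) (x) (τ : Equiv.Perm (Fin n)), x ∈ I n →
    x * MonoidAlgebra.of k (Equiv.Perm (Fin n)) τ ∈ I n
  comp_mem : ∀ (m n : ℕ) (i : Fin m) (μ : MonoidAlgebra k (Equiv.Perm (Fin m)))
    (ν : MonoidAlgebra k (Equiv.Perm (Fin n)))
    (ρ : MonoidAlgebra k (Equiv.Perm (Fin (m + n - 1)))),
    (μ ∈ I m ∨ ν ∈ I n) →
    Phi k (m + n - 1) ρ = compAt k m n i (Phi k m μ) (Phi k n ν) → ρ ∈ I (m + n - 1)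

/-- A proper operadic ideal: not all of `As`. -/
def OperadProper (I : ∀ n, Set (MonoidAlgebra k (Equiv.Perm (Fin n)))) : Prop :=
  ∃ n, I n ≠ Set.univ

/-- `I` is the operadic ideal of `As` generated by the set `S`. -/
def OperadGeneratedBy (I : ∀ n, Set (MonoidAlgebra k (Equiv.Perm (Fin n))))
    (S : Set (Σ n, MonoidAlgebra k (Equiv.Perm (Fin n)))) : Prop :=
  IsOperadicIdeal k I ∧ (∀ s ∈ S, s.2 ∈ I s.1) ∧
    ∀ J, IsOperadicIdeal k J → (∀ s ∈ S, s.2 ∈ J s.1) → ∀ n, I n ⊆ J n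

/-- A T-ideal: a two-sided ideal stable under every algebra endomorphism of `k⟨X⟩`. -/
def IsTIdeal (J : TwoSidedIdeal (FX k)) : Prop :=
  ∀ φ : FX k →ₐ[k] FX k, ∀ x ∈ J, φ x ∈ J

/-- `J` is the T-ideal of `k⟨X⟩` generated by `S`. -/
def TIdealGeneratedBy (J : TwoSidedIdeal (FX k)) (S : Set (FX k)) : Prop :=
  IsTIdeal k J ∧ (∀ s ∈ S, s ∈ J) ∧
    ∀ J' : TwoSidedIdeal (FX k), IsTIdeal k J' → (∀ s ∈ S, s ∈ J') → J ≤ J'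

/-- `Ψ(J)(n) = Φₙ⁻¹(Vₙ(k⟨X⟩/J))`: the multilinear identities of `k⟨X⟩/J`, i.e. those
`θ` all of whose substitution instances land in `J`. -/
def PsiSet (J : TwoSidedIdeal (FX k)) (n : ℕ) : Set (MonoidAlgebra k (Equiv.Perm (Fin n))) :=
  { θ | ∀ u : Fin n → FX k, FreeAlgebra.lift k u (Phi k n θ) ∈ J }

/-- The set of all substitution instances `Φₙ(θ)(f₁,…,fₙ)`, `θ ∈ I(n)`, `fᵢ ∈ k⟨X⟩`. -/
def OmegaSet (I : ∀ n, Set (MonoidAlgebra k (Equiv.Perm (Fin n)))) : Set (FX k) :=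
  { y | ∃ (n : ℕ) (θ : MonoidAlgebra k (Equiv.Perm (Fin n))) (u : Fin n → FX k),
      θ ∈ I n ∧ y = FreeAlgebra.lift k u (Phi k n θ) }

/-- `Ω(I)`: the ideal of `k⟨X⟩` generated by all substitution instances of elements of `I`. -/
def OmegaI (I : ∀ n, Set (MonoidAlgebra k (Equiv.Perm (Fin n)))) : TwoSidedIdeal (FX k) :=
  TwoSidedIdeal.span (OmegaSet k I)

/-- `Id(A)`: the set of polynomial identities of `A` inside `k⟨X⟩`. -/
def IdOf (A : Type) [Ring A] [Algebra k A] : Set (FX k) :=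
  { f | ∀ φ : FX k →ₐ[k] A, φ f = 0 }

/-- `I_f`: all finite sums `Σ gᵢ f(u_{i1},…,u_{in}) hᵢ`. -/
def Iset (n : ℕ) (f : FreeAlgebra k (Fin n)) : Set (FX k) :=
  { y | ∃ (m : ℕ) (g h : Fin m → FX k) (u : Fin m → Fin n → FX k),
      y = ∑ i, g i * FreeAlgebra.lift k (u i) f * h i }

variable (k : Type) [Field k]

/-!
Each `fᵢ` is multilinear, so `fᵢ = Φ(θᵢ)`, and `θᵢ ∈ Ψ(J)` because every substitution instance
of `fᵢ` is the image of `fᵢ` under an endomorphism of `k⟨X⟩`. Conversely, if a proper operadic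
ideal `I` contains all `θᵢ`, then `Ω(I)` is a T-ideal containing all `fᵢ`, so `J ≤ Ω(I)` and
`Ψ(J) ⊆ Ψ(Ω(I)) = I`; an improper operadic ideal contains `Ψ(J)` trivially.
-/

section

variable {k}

lemma algHom_freeAlgebraLift_apply {R X A B : Type*} [CommSemiring R] [Semiring A] [Algebra R A]
    [Semiring B] [Algebra R B] (φ : A →ₐ[R] B) (u : X → A) (p : FreeAlgebra R X) :
    φ (FreeAlgebra.lift R u p) = FreeAlgebra.lift R (fun x => φ (u x)) p := by
  rw [← AlgHom.comp_apply]
  congr 1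
  ext x
  simp

lemma exists_Phi_eq_of_mem_Vmulti {n : ℕ} {f : FreeAlgebra k (Fin n)} (hf : f ∈ Vmulti k n) :
    ∃ θ, Phi k n θ = f := by
  rw [Vmulti, ← Finsupp.range_linearCombination] at hf
  obtain ⟨x, rfl⟩ := hf
  exact ⟨(MonoidAlgebra.coeffLinearEquiv k).symm x, by simp [Phi]⟩

lemma exists_algHom_apply_toFX {n : ℕ} (u : Fin n → FX k) :
    ∃ φ : FX k →ₐ[k] FX k, ∀ f, φ (toFX k n f) = FreeAlgebra.lift k u f := by
  refine ⟨FreeAlgebra.lift k fun m => if h : m < n then u ⟨m, h⟩ else 0, fun f => ?_⟩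
  rw [toFX, algHom_freeAlgebraLift_apply]
  simp

lemma IsTIdeal.lift_mem_of_toFX_mem {J : TwoSidedIdeal (FX k)} (hJ : IsTIdeal k J) {n : ℕ}
    {f : FreeAlgebra k (Fin n)} (hf : toFX k n f ∈ J) (u : Fin n → FX k) :
    FreeAlgebra.lift k u f ∈ J := by
  obtain ⟨φ, hφ⟩ := exists_algHom_apply_toFX u
  exact hφ f ▸ hJ φ _ hf

lemma PsiSet_mono {J J' : TwoSidedIdeal (FX k)} (h : J ≤ J') (n : ℕ) :
    PsiSet k J n ⊆ PsiSet k J' n :=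
  fun _ hθ u => h (hθ u)

lemma isTIdeal_OmegaI (I : ∀ n, Set (MonoidAlgebra k (Equiv.Perm (Fin n)))) :
    IsTIdeal k (OmegaI k I) := by
  intro φ x hx
  suffices OmegaI k I ≤ TwoSidedIdeal.comap φ (OmegaI k I) from
    (TwoSidedIdeal.mem_comap φ).mp (this hx)
  refine TwoSidedIdeal.span_le.mpr ?_
  rintro _ ⟨n, θ, u, hθ, rfl⟩
  rw [SetLike.mem_coe, TwoSidedIdeal.mem_comap, algHom_freeAlgebraLift_apply]
  exact TwoSidedIdeal.subset_span ⟨n, θ, _, hθ, rfl⟩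

lemma toFX_Phi_mem_OmegaI {I : ∀ n, Set (MonoidAlgebra k (Equiv.Perm (Fin n)))} {n : ℕ}
    {θ : MonoidAlgebra k (Equiv.Perm (Fin n))} (hθ : θ ∈ I n) :
    toFX k n (Phi k n θ) ∈ OmegaI k I :=
  TwoSidedIdeal.subset_span ⟨n, θ, _, hθ, rfl⟩

end

theorem Psi_of_generated_TIdeal
    (hPsiOp : ∀ J : TwoSidedIdeal (FX k), IsTIdeal k J → J ≠ ⊤ →
      IsOperadicIdeal k (PsiSet k J) ∧ OperadProper k (PsiSet k J))
    (hinv2 : ∀ I, IsOperadicIdeal k I → OperadProper k I →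
      ∀ n, PsiSet k (OmegaI k I) n = I n)
    (J : TwoSidedIdeal (FX k)) (hJ : IsTIdeal k J) (hJp : J ≠ ⊤)
    (s : ℕ) (f : Fin s → Σ n, FreeAlgebra k (Fin n))
    (hml : ∀ i, (f i).2 ∈ Vmulti k (f i).1)
    (hgen : TIdealGeneratedBy k J {y | ∃ i, y = toFX k (f i).1 (f i).2}) :
    ∃ θ : (i : Fin s) → MonoidAlgebra k (Equiv.Perm (Fin (f i).1)),
      (∀ i, Phi k (f i).1 (θ i) = (f i).2) ∧
      OperadGeneratedBy k (PsiSet k J) {w | ∃ i, w = ⟨(f i).1, θ i⟩} := by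
  choose θ hθ using fun i => exists_Phi_eq_of_mem_Vmulti (hml i)
  refine ⟨θ, hθ, (hPsiOp J hJ hJp).1, ?_, ?_⟩
  · rintro _ ⟨i, rfl⟩
    exact hJ.lift_mem_of_toFX_mem (hθ i ▸ hgen.2.1 _ ⟨i, rfl⟩)
  · intro I hI hθI n
    by_cases hIp : OperadProper k I
    · have hJI : J ≤ OmegaI k I := by
        refine hgen.2.2 _ (isTIdeal_OmegaI I) ?_
        rintro _ ⟨i, rfl⟩
        exact hθ i ▸ toFX_Phi_mem_OmegaI (hθI _ ⟨i, rfl⟩)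
      exact hinv2 I hI hIp n ▸ PsiSet_mono hJI n
    · simp only [OperadProper, not_exists, not_not] at hIp
      exact hIp n ▸ Set.subset_univ _

end AsOperadPaper
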